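/- arXiv:2404.17303 — 2 statements merged into one kernel-verified Lean document; each statement's English description precedes it below -/
import Mathlib

section
/- Let U, H be Hopf algebras and R : H ⊗ U → U ⊗ H a normal, multiplicative coalgebra map, with actions h ▷ u := ε_H(h^R)u^R and h ◁ u := ε_U(u^R)h^R. Then for all u ∈ U, h ∈ H: (h₍₁₎ ▷ u₍₁₎)·((h₍₂₎ ◁ u₍₂₎) ▷ S_U(u₍₃₎)) = ε_U(u)ε_H(h)1_U; in other words, the map ▷∘(◁ ⊗ S_U)∘(id_H ⊗ Δ_U) is a right convolution inverse of ▷ in the convolution algebra Hom_k(H ⊗ U, U). -/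
open TensorProduct

noncomputable section

variable {k : Type*} [Field k]
variable {U : Type*} [Ring U] [HopfAlgebra k U]
variable {H : Type*} [Ring H] [HopfAlgebra k H]

/-- The tensor product comultiplication on `A ⊗ B`:
`a ⊗ b ↦ (a₍₁₎ ⊗ b₍₁₎) ⊗ (a₍₂₎ ⊗ b₍₂₎)`. -/
def comulTP (k A B : Type*) [Field k] [Ring A] [HopfAlgebra k A] [Ring B] [HopfAlgebra k B] :
    A ⊗[k] B →ₗ[k] (A ⊗[k] B) ⊗[k] (A ⊗[k] B) :=
  (TensorProduct.tensorTensorTensorComm k A A B B).toLinearMap ∘ₗ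
    TensorProduct.map (Coalgebra.comul (R := k)) (Coalgebra.comul (R := k))

/-- The tensor product counit on `A ⊗ B`: `a ⊗ b ↦ ε(a)ε(b)`. -/
def counitTP (k A B : Type*) [Field k] [Ring A] [HopfAlgebra k A] [Ring B] [HopfAlgebra k B] :
    A ⊗[k] B →ₗ[k] k :=
  (TensorProduct.lid k k).toLinearMap ∘ₗ
    TensorProduct.map (Coalgebra.counit (R := k)) (Coalgebra.counit (R := k))

/-- `R` is left normal: `R(h ⊗ 1_U) = 1_U ⊗ h`. -/
def LeftNormal (R : H ⊗[k] U →ₗ[k] U ⊗[k] H) : Prop :=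
  ∀ h : H, R (h ⊗ₜ[k] (1 : U)) = (1 : U) ⊗ₜ[k] h

/-- `R` is right normal: `R(1_H ⊗ u) = u ⊗ 1_H`. -/
def RightNormal (R : H ⊗[k] U →ₗ[k] U ⊗[k] H) : Prop :=
  ∀ u : U, R ((1 : H) ⊗ₜ[k] u) = u ⊗ₜ[k] (1 : H)

/-- `R` is left multiplicative: `u^R ⊗ (hh')^R = (u^R)^r ⊗ h^r(h')^R`,
as an equality of linear maps `(H ⊗ H) ⊗ U → U ⊗ H`. -/
def LeftMult (R : H ⊗[k] U →ₗ[k] U ⊗[k] H) : Prop :=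
  R ∘ₗ TensorProduct.map (LinearMap.mul' k H) (LinearMap.id : U →ₗ[k] U) =
    TensorProduct.map (LinearMap.id : U →ₗ[k] U) (LinearMap.mul' k H) ∘ₗ
      (TensorProduct.assoc k U H H).toLinearMap ∘ₗ
      TensorProduct.map R (LinearMap.id : H →ₗ[k] H) ∘ₗ
      (TensorProduct.assoc k H U H).symm.toLinearMap ∘ₗ
      TensorProduct.map (LinearMap.id : H →ₗ[k] H) R ∘ₗ
      (TensorProduct.assoc k H H U).toLinearMap

/-- `R` is right multiplicative: `(uu')^R ⊗ h^R = u^R(u')^r ⊗ (h^R)^r`,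
as an equality of linear maps `H ⊗ (U ⊗ U) → U ⊗ H`. -/
def RightMult (R : H ⊗[k] U →ₗ[k] U ⊗[k] H) : Prop :=
  R ∘ₗ TensorProduct.map (LinearMap.id : H →ₗ[k] H) (LinearMap.mul' k U) =
    TensorProduct.map (LinearMap.mul' k U) (LinearMap.id : H →ₗ[k] H) ∘ₗ
      (TensorProduct.assoc k U U H).symm.toLinearMap ∘ₗ
      TensorProduct.map (LinearMap.id : U →ₗ[k] U) R ∘ₗ
      (TensorProduct.assoc k U H U).toLinearMap ∘ₗ
      TensorProduct.map R (LinearMap.id : U →ₗ[k] U) ∘ₗ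
      (TensorProduct.assoc k H U U).symm.toLinearMap

/-- `R` is a coalgebra map for the tensor product coalgebra structures. -/
def IsCoalgMap (R : H ⊗[k] U →ₗ[k] U ⊗[k] H) : Prop :=
  counitTP k U H ∘ₗ R = counitTP k H U ∧
    comulTP k U H ∘ₗ R = TensorProduct.map R R ∘ₗ comulTP k H U

/-- The left action `h ⊗ u ↦ h ▷ u = ε_H(h^R)u^R`, as a linear map `H ⊗ U → U`. -/
def lact (R : H ⊗[k] U →ₗ[k] U ⊗[k] H) : H ⊗[k] U →ₗ[k] U :=
  (TensorProduct.rid k U).toLinearMap ∘ₗ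
    TensorProduct.map (LinearMap.id : U →ₗ[k] U) (Coalgebra.counit (R := k)) ∘ₗ R

/-- The right action `h ⊗ u ↦ h ◁ u = ε_U(u^R)h^R`, as a linear map `H ⊗ U → H`. -/
def ract (R : H ⊗[k] U →ₗ[k] U ⊗[k] H) : H ⊗[k] U →ₗ[k] H :=
  (TensorProduct.lid k H).toLinearMap ∘ₗ
    TensorProduct.map (Coalgebra.counit (R := k)) (LinearMap.id : H →ₗ[k] H) ∘ₗ R

/-!
Because `R` is a coalgebra map, `R(h ⊗ u) = (h₁ ▷ u₁) ⊗ (h₂ ◁ u₂)`; combined with right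
multiplicativity this gives `h ▷ (uv) = (h₁ ▷ u₁)((h₂ ◁ u₂) ▷ v)`. Taking `v = S(u₃)` and using
coassociativity, the left-hand side collapses to `h ▷ (u₁ S(u₂)) = ε(u) (h ▷ 1)`, which is
`ε(u) ε(h) 1` by left normality.
-/

open LinearMap

theorem map_counit_comp_comulTP (k A B : Type*) [Field k] [Ring A] [HopfAlgebra k A] [Ring B]
    [HopfAlgebra k B] :
    TensorProduct.map
        ((TensorProduct.rid k A).toLinearMap ∘ₗ
          TensorProduct.map LinearMap.id (Coalgebra.counit (R := k)))
        ((TensorProduct.lid k B).toLinearMap ∘ₗ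
          TensorProduct.map (Coalgebra.counit (R := k)) LinearMap.id) ∘ₗ
      comulTP k A B = LinearMap.id := by
  have hsplit : TensorProduct.map
        ((TensorProduct.rid k A).toLinearMap ∘ₗ
          TensorProduct.map LinearMap.id (Coalgebra.counit (R := k)))
        ((TensorProduct.lid k B).toLinearMap ∘ₗ
          TensorProduct.map (Coalgebra.counit (R := k)) LinearMap.id) ∘ₗ
      (TensorProduct.tensorTensorTensorComm k A A B B).toLinearMap =
      TensorProduct.map
        ((TensorProduct.rid k A).toLinearMap ∘ₗ (Coalgebra.counit (R := k)).lTensor A)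
        ((TensorProduct.lid k B).toLinearMap ∘ₗ (Coalgebra.counit (R := k)).rTensor B) := by
    ext
    simp [← TensorProduct.smul_tmul', smul_smul, mul_comm]
  rw [comulTP, ← comp_assoc, hsplit, ← TensorProduct.map_comp, comp_assoc, comp_assoc,
    Coalgebra.lTensor_counit_comp_comul, Coalgebra.rTensor_counit_comp_comul]
  ext; simp

theorem eq_map_lact_ract_comp_comulTP (R : H ⊗[k] U →ₗ[k] U ⊗[k] H)
    (hR : comulTP k U H ∘ₗ R = TensorProduct.map R R ∘ₗ comulTP k H U) :
    R = TensorProduct.map (lact R) (ract R) ∘ₗ comulTP k H U := by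
  rw [lact, ract, ← comp_assoc, ← comp_assoc, TensorProduct.map_comp, comp_assoc, ← hR,
    ← comp_assoc, map_counit_comp_comulTP, id_comp]

theorem rid_map_comp_map_mul'_comp_assoc_symm {A M : Type*} [Ring A] [Algebra k A]
    [AddCommGroup M] [Module k M] (f : M →ₗ[k] k) :
    (TensorProduct.rid k A).toLinearMap ∘ₗ TensorProduct.map LinearMap.id f ∘ₗ
        TensorProduct.map (mul' k A) LinearMap.id ∘ₗ
        (TensorProduct.assoc k A A M).symm.toLinearMap =
      mul' k A ∘ₗ
        ((TensorProduct.rid k A).toLinearMap ∘ₗ TensorProduct.map LinearMap.id f).lTensor A := by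
  ext; simp

-- `h ▷ (xv) = x^R (h^R ▷ v)`
theorem lact_comp_lTensor_mul' (R : H ⊗[k] U →ₗ[k] U ⊗[k] H) (hrm : RightMult R) :
    lact R ∘ₗ (mul' k U).lTensor H =
      mul' k U ∘ₗ (lact R).lTensor U ∘ₗ (TensorProduct.assoc k U H U).toLinearMap ∘ₗ
        R.rTensor U ∘ₗ (TensorProduct.assoc k H U U).symm.toLinearMap := by
  have hproj :=
    rid_map_comp_map_mul'_comp_assoc_symm (A := U) (Coalgebra.counit (R := k) (A := H))
  have hmul := congr(((TensorProduct.rid k U).toLinearMap ∘ₗ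
    TensorProduct.map LinearMap.id Coalgebra.counit) ∘ₗ $hrm)
  simp only [← comp_assoc] at hproj hmul
  rw [hproj] at hmul
  simp only [lact, lTensor_comp, comp_assoc] at hmul ⊢
  exact hmul

-- `h ▷ (x g(z)) = (h₁ ▷ x₁)((h₂ ◁ x₂) ▷ g(z))`
theorem lact_comp_lTensor_mul'_comp_lTensor (R : H ⊗[k] U →ₗ[k] U ⊗[k] H) (hrm : RightMult R)
    (hR : comulTP k U H ∘ₗ R = TensorProduct.map R R ∘ₗ comulTP k H U) (g : U →ₗ[k] U) :
    lact R ∘ₗ (mul' k U ∘ₗ g.lTensor U).lTensor H =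
      mul' k U ∘ₗ
        TensorProduct.map (lact R)
          (lact R ∘ₗ TensorProduct.map (ract R) g ∘ₗ
            (TensorProduct.assoc k H U U).symm.toLinearMap) ∘ₗ
        (TensorProduct.tensorTensorTensorComm k H H U (U ⊗[k] U)).toLinearMap ∘ₗ
        TensorProduct.map Coalgebra.comul
          ((TensorProduct.assoc k U U U).toLinearMap ∘ₗ Coalgebra.comul.rTensor U) := by
  rw [lTensor_comp, ← comp_assoc, lact_comp_lTensor_mul' R hrm]
  ext h x z
  simp only [AlgebraTensorModule.curry_apply, restrictScalars_self, curry_apply, coe_comp,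
    LinearEquiv.coe_coe, Function.comp_apply, lTensor_tmul, assoc_symm_tmul, rTensor_tmul,
    map_tmul]
  rw [LinearMap.congr_fun (eq_map_lact_ract_comp_comulTP R hR) (h ⊗ₜ x)]
  simp only [comulTP, comp_apply, LinearEquiv.coe_coe, map_tmul]
  -- both sides are now linear in `Δh ⊗ Δx`
  generalize Coalgebra.comul (R := k) h = s
  generalize Coalgebra.comul (R := k) x = t
  induction s using TensorProduct.induction_on with
  | zero => simp
  | add s s' hs hs' => simp only [TensorProduct.add_tmul, map_add, hs, hs']
  | tmul a b =>
    induction t using TensorProduct.induction_on with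
    | zero => simp
    | add t t' ht ht' =>
      simp only [TensorProduct.tmul_add, TensorProduct.add_tmul, map_add, ht, ht']
    | tmul c d => simp

theorem lact_comp_lTensor_algebraMap_comp_counit (R : H ⊗[k] U →ₗ[k] U ⊗[k] H)
    (hln : LeftNormal R) :
    lact R ∘ₗ (Algebra.linearMap k U ∘ₗ Coalgebra.counit).lTensor H =
      Algebra.linearMap k U ∘ₗ counitTP k H U := by
  ext h u
  simp [lact, counitTP, Algebra.algebraMap_eq_smul_one, hln h, smul_smul, mul_comm]

theorem lact_right_convolution_inverse_general (R : H ⊗[k] U →ₗ[k] U ⊗[k] H)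
    (hln : LeftNormal R) (hrm : RightMult R) (hcm : IsCoalgMap R) :
    LinearMap.mul' k U ∘ₗ
      TensorProduct.map (lact R)
        (lact R ∘ₗ
          TensorProduct.map (ract R) (HopfAlgebra.antipode (R := k) (A := U)) ∘ₗ
          (TensorProduct.assoc k H U U).symm.toLinearMap) ∘ₗ
      (TensorProduct.tensorTensorTensorComm k H H U (U ⊗[k] U)).toLinearMap ∘ₗ
      TensorProduct.map (Coalgebra.comul (R := k))
        (LinearMap.lTensor U (Coalgebra.comul (R := k)) ∘ₗ Coalgebra.comul (R := k)) =
    Algebra.linearMap k U ∘ₗ counitTP k H U := by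
  have hmul := lact_comp_lTensor_mul'_comp_lTensor R hrm hcm.2 (HopfAlgebra.antipode k)
  rw [← Coalgebra.coassoc, ← comp_assoc Coalgebra.comul,
    ← map_comp_lTensor (f := Coalgebra.comul (R := k) (A := H))]
  simp only [← comp_assoc] at hmul ⊢
  rw [← hmul, comp_assoc, ← lTensor_comp, comp_assoc, HopfAlgebra.mul_antipode_lTensor_comul,
    lact_comp_lTensor_algebraMap_comp_counit R hln]

/-- STATEMENT 13: for a normal, multiplicative coalgebra map `R : H ⊗ U → U ⊗ H`,
`(h₍₁₎ ▷ u₍₁₎)·((h₍₂₎ ◁ u₍₂₎) ▷ S_U(u₍₃₎)) = ε_U(u)ε_H(h)1_U`, i.e. the map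
`▷ ∘ (◁ ⊗ S_U) ∘ (id ⊗ Δ_U)` is a right convolution inverse of `▷`;
stated as an equality of linear maps `H ⊗ U → U`. -/
theorem lact_right_convolution_inverse (R : H ⊗[k] U →ₗ[k] U ⊗[k] H)
    (hln : LeftNormal R) (hrn : RightNormal R)
    (hlm : LeftMult R) (hrm : RightMult R) (hcm : IsCoalgMap R) :
    LinearMap.mul' k U ∘ₗ
      TensorProduct.map (lact R)
        (lact R ∘ₗ
          TensorProduct.map (ract R) (HopfAlgebra.antipode (R := k) (A := U)) ∘ₗ
          (TensorProduct.assoc k H U U).symm.toLinearMap) ∘ₗ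
      (TensorProduct.tensorTensorTensorComm k H H U (U ⊗[k] U)).toLinearMap ∘ₗ
      TensorProduct.map (Coalgebra.comul (R := k))
        (LinearMap.lTensor U (Coalgebra.comul (R := k)) ∘ₗ Coalgebra.comul (R := k)) =
    Algebra.linearMap k U ∘ₗ counitTP k H U :=
  lact_right_convolution_inverse_general R hln hrm hcm
end
end

section
/- Let U, H be Hopf algebras and R : H ⊗ U → U ⊗ H a normal, multiplicative coalgebra map. Then for all u ∈ U, h ∈ H the identity S_U(u^R)^r ⊗ S_H(h^R)^r = S_U(u) ⊗ S_H(h) holds in U ⊗ H (i.e. R ∘ (S_H ⊗ S_U) ∘ τ ∘ R = (S_U ⊗ S_H) ∘ τ as maps H ⊗ U → U ⊗ H, where τ denotes the tensor flip). -/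
open TensorProduct

noncomputable section

variable {k : Type*} [Field k]
variable {U : Type*} [Ring U] [HopfAlgebra k U]
variable {H : Type*} [Ring H] [HopfAlgebra k H]

/-! `R` twists the multiplication of `U ⊗ H` into an associative unital one
(multiplicativity gives associativity, normality the unit), so linear maps `H ⊗ U → U ⊗ H`
form a monoid under convolution against the tensor product coalgebra `H ⊗ U`.
Right multiplicativity and left normality make `(S_U ⊗ S_H) ∘ τ` a right inverse of `R`
there; since `R` is moreover a coalgebra map, `R ∘ (S_H ⊗ S_U) ∘ τ ∘ R` is a left inverse
of `R`. Left and right inverses coincide. -/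

section Convolution

variable {K C C' A : Type*} [CommSemiring K] [AddCommMonoid C] [Module K C]
  [AddCommMonoid C'] [Module K C'] [AddCommMonoid A] [Module K A]

def convWith [CoalgebraStruct K C] (m : A ⊗[K] A →ₗ[K] A) (f g : C →ₗ[K] A) : C →ₗ[K] A :=
  m ∘ₗ TensorProduct.map f g ∘ₗ Coalgebra.comul

theorem convWith_tmul [CoalgebraStruct K C] [CoalgebraStruct K C'] {c : C} {c' : C'}
    {ι κ : Type*} (rc : Coalgebra.Repr K c ι) (rc' : Coalgebra.Repr K c' κ)
    (m : A ⊗[K] A →ₗ[K] A) (f g : C ⊗[K] C' →ₗ[K] A) :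
    convWith m f g (c ⊗ₜ c') = ∑ i ∈ rc.index, ∑ j ∈ rc'.index,
      m (f (rc.left i ⊗ₜ rc'.left j) ⊗ₜ g (rc.right i ⊗ₜ rc'.right j)) := by
  simp only [convWith, LinearMap.coe_comp, Function.comp_apply, comul_tmul, ← rc.eq, ← rc'.eq,
    tmul_sum, sum_tmul, map_sum, AlgebraTensorModule.tensorTensorTensorComm_tmul, map_tmul]
  exact Finset.sum_comm

theorem convWith_comp_coalgHom [CoalgebraStruct K C] [CoalgebraStruct K C']
    (m : A ⊗[K] A →ₗ[K] A) (φ : C' →ₗc[K] C) (f g : C →ₗ[K] A) :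
    convWith m (f ∘ₗ φ.toLinearMap) (g ∘ₗ φ.toLinearMap) = convWith m f g ∘ₗ φ.toLinearMap := by
  rw [convWith, convWith, TensorProduct.map_comp, LinearMap.comp_assoc, LinearMap.comp_assoc,
    φ.map_comp_comul, LinearMap.comp_assoc]

theorem counit_smulRight_comp_coalgHom [CoalgebraStruct K C] [CoalgebraStruct K C']
    (φ : C' →ₗc[K] C) (e : A) :
    (Coalgebra.counit (R := K) (A := C)).smulRight e ∘ₗ φ.toLinearMap =
      Coalgebra.counit.smulRight e := by
  ext c
  simp

variable [Coalgebra K C] {m : A ⊗[K] A →ₗ[K] A}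

open LinearMap in
theorem convWith_assoc
    (hm : m ∘ₗ m.rTensor A = m ∘ₗ m.lTensor A ∘ₗ (TensorProduct.assoc K A A A).toLinearMap)
    (f g h : C →ₗ[K] A) :
    convWith m (convWith m f g) h = convWith m f (convWith m g h) := by
  have hl : TensorProduct.map (convWith m f g) h =
      m.rTensor A ∘ₗ TensorProduct.map (TensorProduct.map f g) h ∘ₗ
        Coalgebra.comul.rTensor C := by
    rw [map_comp_rTensor, rTensor_comp_map, convWith]
  have hr : TensorProduct.map f (convWith m g h) =
      m.lTensor A ∘ₗ TensorProduct.map f (TensorProduct.map g h) ∘ₗ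
        Coalgebra.comul.lTensor C := by
    rw [map_comp_lTensor, lTensor_comp_map, convWith]
  calc convWith m (convWith m f g) h
      = (m ∘ₗ m.rTensor A) ∘ₗ TensorProduct.map (TensorProduct.map f g) h ∘ₗ
          Coalgebra.comul.rTensor C ∘ₗ Coalgebra.comul := by
        rw [convWith, hl]
        simp only [comp_assoc]
    _ = m ∘ₗ m.lTensor A ∘ₗ TensorProduct.map f (TensorProduct.map g h) ∘ₗ
          (TensorProduct.assoc K C C C).toLinearMap ∘ₗ Coalgebra.comul.rTensor C ∘ₗ
          Coalgebra.comul := by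
        rw [hm]
        simp only [comp_assoc]
        rw [← comp_assoc _ (TensorProduct.assoc K C C C).toLinearMap,
          TensorProduct.map_map_comp_assoc_eq, comp_assoc]
    _ = convWith m f (convWith m g h) := by
        rw [Coalgebra.coassoc, convWith, hr]
        simp only [comp_assoc]

open LinearMap in
theorem convWith_counit_smulRight_left {e : A} (he : ∀ a, m (e ⊗ₜ[K] a) = a) (f : C →ₗ[K] A) :
    convWith m (Coalgebra.counit.smulRight e) f = f := by
  have hε : TensorProduct.map ((Coalgebra.counit (R := K) (A := C)).smulRight e) f =
      TensorProduct.map ((LinearMap.id : K →ₗ[K] K).smulRight e) f ∘ₗ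
        Coalgebra.counit.rTensor C := by
    rw [map_comp_rTensor]; rfl
  ext c
  simp only [convWith, hε, comp_apply, Coalgebra.rTensor_counit_comul,
    TensorProduct.map_tmul, smulRight_apply, id_apply, one_smul, he]

open LinearMap in
theorem convWith_counit_smulRight_right {e : A} (he : ∀ a, m (a ⊗ₜ[K] e) = a) (f : C →ₗ[K] A) :
    convWith m f (Coalgebra.counit.smulRight e) = f := by
  have hε : TensorProduct.map f ((Coalgebra.counit (R := K) (A := C)).smulRight e) =
      TensorProduct.map f ((LinearMap.id : K →ₗ[K] K).smulRight e) ∘ₗ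
        Coalgebra.counit.lTensor C := by
    rw [map_comp_lTensor]; rfl
  ext c
  simp only [convWith, hε, comp_apply, Coalgebra.lTensor_counit_comul,
    TensorProduct.map_tmul, smulRight_apply, id_apply, one_smul, he]

theorem convWith_left_inv_eq_right_inv
    (hm : m ∘ₗ m.rTensor A = m ∘ₗ m.lTensor A ∘ₗ (TensorProduct.assoc K A A A).toLinearMap)
    {e : A} (he_left : ∀ a, m (e ⊗ₜ[K] a) = a) (he_right : ∀ a, m (a ⊗ₜ[K] e) = a)
    {f g h : C →ₗ[K] A} (hfg : convWith m f g = Coalgebra.counit.smulRight e)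
    (hgh : convWith m g h = Coalgebra.counit.smulRight e) : f = h := calc
  f = convWith m f (convWith m g h) := by rw [hgh, convWith_counit_smulRight_right he_right]
  _ = convWith m (convWith m f g) h := (convWith_assoc hm f g h).symm
  _ = h := by rw [hfg, convWith_counit_smulRight_left he_left]

end Convolution

section MulTensor

variable {K A M : Type*} [CommSemiring K] [Semiring A] [Algebra K A] [AddCommMonoid M]
  [Module K M]

theorem map_mul'_assoc_symm_tmul (a : A) (z : A ⊗[K] M) :
    TensorProduct.map (LinearMap.mul' K A) LinearMap.id
        ((TensorProduct.assoc K A A M).symm (a ⊗ₜ z)) =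
      TensorProduct.map (LinearMap.mulLeft K a) LinearMap.id z := by
  induction z using TensorProduct.induction_on with
  | zero => simp
  | tmul b x => simp
  | add x y hx hy => simp only [tmul_add, map_add, hx, hy]

theorem map_mul'_assoc_tmul (z : M ⊗[K] A) (a : A) :
    TensorProduct.map LinearMap.id (LinearMap.mul' K A) (TensorProduct.assoc K M A A (z ⊗ₜ a)) =
      TensorProduct.map LinearMap.id (LinearMap.mulRight K a) z := by
  induction z using TensorProduct.induction_on with
  | zero => simp
  | tmul x b => simp
  | add x y hx hy => simp only [add_tmul, map_add, hx, hy]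

end MulTensor

section TwistedMul

/-- `(u ⊗ h) (u' ⊗ h') = u u'^R ⊗ h^R h'`: the twisted tensor product algebra `U ⊗_R H`. -/
def twistedMul (R : H ⊗[k] U →ₗ[k] U ⊗[k] H) :
    (U ⊗[k] H) ⊗[k] (U ⊗[k] H) →ₗ[k] U ⊗[k] H :=
  TensorProduct.map (LinearMap.mul' k U) (LinearMap.mul' k H) ∘ₗ
    (TensorProduct.assoc k U U (H ⊗[k] H)).symm.toLinearMap ∘ₗ
    LinearMap.lTensor U ((TensorProduct.assoc k U H H).toLinearMap ∘ₗ
      R.rTensor H ∘ₗ (TensorProduct.assoc k H U H).symm.toLinearMap) ∘ₗ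
    (TensorProduct.assoc k U H (U ⊗[k] H)).toLinearMap

variable {R : H ⊗[k] U →ₗ[k] U ⊗[k] H}

theorem twistedMul_tmul (u : U) (h : H) (u' : U) (h' : H) :
    twistedMul R ((u ⊗ₜ[k] h) ⊗ₜ[k] (u' ⊗ₜ[k] h')) =
      TensorProduct.map (LinearMap.mulLeft k u) (LinearMap.mulRight k h') (R (h ⊗ₜ[k] u')) := by
  simp only [twistedMul, LinearMap.coe_comp, Function.comp_apply, LinearEquiv.coe_coe,
    TensorProduct.assoc_tmul, LinearMap.lTensor_tmul, TensorProduct.assoc_symm_tmul,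
    LinearMap.rTensor_tmul]
  induction R (h ⊗ₜ[k] u') using TensorProduct.induction_on with
  | zero => simp
  | tmul a b => simp
  | add x y hx hy => simp only [map_add, add_tmul, tmul_add, hx, hy]

theorem twistedMul_one_tmul (hrn : RightNormal R) (w : U ⊗[k] H) :
    twistedMul R (((1 : U) ⊗ₜ[k] (1 : H)) ⊗ₜ[k] w) = w := by
  induction w using TensorProduct.induction_on with
  | zero => simp
  | tmul u h => simp [twistedMul_tmul, hrn u]
  | add x y hx hy => simp only [tmul_add, map_add, hx, hy]

theorem twistedMul_tmul_one (hln : LeftNormal R) (w : U ⊗[k] H) :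
    twistedMul R (w ⊗ₜ[k] ((1 : U) ⊗ₜ[k] (1 : H))) = w := by
  induction w using TensorProduct.induction_on with
  | zero => simp
  | tmul u h => simp [twistedMul_tmul, hln h]
  | add x y hx hy => simp only [add_tmul, map_add, hx, hy]

theorem twistedMul_R_tmul (hrm : RightMult R) (g : H) (v b : U) (y : H) :
    twistedMul R (R (g ⊗ₜ[k] v) ⊗ₜ[k] (b ⊗ₜ[k] y)) =
      TensorProduct.map LinearMap.id (LinearMap.mulRight k y) (R (g ⊗ₜ[k] (v * b))) := by
  have hR := LinearMap.congr_fun hrm (g ⊗ₜ[k] (v ⊗ₜ[k] b))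
  simp only [LinearMap.coe_comp, Function.comp_apply, TensorProduct.map_tmul,
    LinearMap.id_coe, id_eq, LinearMap.mul'_apply, LinearEquiv.coe_coe,
    TensorProduct.assoc_symm_tmul] at hR
  rw [hR]
  induction R (g ⊗ₜ[k] v) using TensorProduct.induction_on with
  | zero => simp
  | tmul a c =>
    rw [twistedMul_tmul, TensorProduct.assoc_tmul, TensorProduct.map_tmul, LinearMap.id_apply,
      map_mul'_assoc_symm_tmul, TensorProduct.map_map, LinearMap.id_comp, LinearMap.comp_id]
  | add x y hx hy => simp only [map_add, add_tmul, hx, hy]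

theorem twistedMul_tmul_R (hlm : LeftMult R) (v : U) (g h : H) (u : U) :
    twistedMul R ((v ⊗ₜ[k] g) ⊗ₜ[k] R (h ⊗ₜ[k] u)) =
      TensorProduct.map (LinearMap.mulLeft k v) LinearMap.id (R ((g * h) ⊗ₜ[k] u)) := by
  have hR := LinearMap.congr_fun hlm ((g ⊗ₜ[k] h) ⊗ₜ[k] u)
  simp only [LinearMap.coe_comp, Function.comp_apply, TensorProduct.map_tmul,
    LinearMap.id_coe, id_eq, LinearMap.mul'_apply, LinearEquiv.coe_coe,
    TensorProduct.assoc_tmul] at hR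
  rw [hR]
  induction R (h ⊗ₜ[k] u) using TensorProduct.induction_on with
  | zero => simp
  | tmul w c =>
    rw [twistedMul_tmul, TensorProduct.assoc_symm_tmul, TensorProduct.map_tmul,
      LinearMap.id_apply, map_mul'_assoc_tmul, TensorProduct.map_map, LinearMap.id_comp,
      LinearMap.comp_id]
  | add x y hx hy => simp only [map_add, tmul_add, hx, hy]

theorem twistedMul_map_tmul (hlm : LeftMult R) (u : U) (h : H) (x : U ⊗[k] H) (u' : U)
    (h' : H) :
    twistedMul R (TensorProduct.map (LinearMap.mulLeft k u) (LinearMap.mulRight k h) x ⊗ₜ[k]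
        (u' ⊗ₜ[k] h')) =
      TensorProduct.map (LinearMap.mulLeft k u) (LinearMap.mulRight k h')
        (twistedMul R (x ⊗ₜ[k] R (h ⊗ₜ[k] u'))) := by
  induction x using TensorProduct.induction_on with
  | zero => simp
  | tmul v g =>
    rw [TensorProduct.map_tmul, LinearMap.mulLeft_apply, LinearMap.mulRight_apply,
      twistedMul_tmul, twistedMul_tmul_R hlm, TensorProduct.map_map, LinearMap.mulLeft_mul,
      LinearMap.comp_id]
  | add x y hx hy => simp only [map_add, add_tmul, hx, hy]

theorem twistedMul_tmul_map (hrm : RightMult R) (u : U) (h : H) (u' : U) (h' : H)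
    (y : U ⊗[k] H) :
    twistedMul R ((u ⊗ₜ[k] h) ⊗ₜ[k]
        TensorProduct.map (LinearMap.mulLeft k u') (LinearMap.mulRight k h') y) =
      TensorProduct.map (LinearMap.mulLeft k u) (LinearMap.mulRight k h')
        (twistedMul R (R (h ⊗ₜ[k] u') ⊗ₜ[k] y)) := by
  induction y using TensorProduct.induction_on with
  | zero => simp
  | tmul w p =>
    rw [TensorProduct.map_tmul, LinearMap.mulLeft_apply, LinearMap.mulRight_apply,
      twistedMul_tmul, twistedMul_R_tmul hrm, TensorProduct.map_map, LinearMap.mulRight_mul,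
      LinearMap.comp_id]
  | add x y hx hy => simp only [map_add, tmul_add, hx, hy]

theorem twistedMul_assoc (hlm : LeftMult R) (hrm : RightMult R) :
    twistedMul R ∘ₗ (twistedMul R).rTensor (U ⊗[k] H) =
      twistedMul R ∘ₗ (twistedMul R).lTensor (U ⊗[k] H) ∘ₗ
        (TensorProduct.assoc k (U ⊗[k] H) (U ⊗[k] H) (U ⊗[k] H)).toLinearMap := by
  ext u h u' h' u'' h''
  simp only [TensorProduct.AlgebraTensorModule.curry_apply, TensorProduct.curry_apply,
    LinearMap.coe_restrictScalars, LinearMap.coe_comp, Function.comp_apply,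
    LinearMap.rTensor_tmul, LinearMap.lTensor_tmul, LinearEquiv.coe_coe,
    TensorProduct.assoc_tmul]
  rw [twistedMul_tmul, twistedMul_tmul, twistedMul_map_tmul hlm, twistedMul_tmul_map hrm]

end TwistedMul

theorem counitTP_eq_counit (A B : Type*) [Ring A] [HopfAlgebra k A] [Ring B] [HopfAlgebra k B] :
    counitTP k A B = Coalgebra.counit := by
  ext a b
  simp [counitTP, mul_comm]

def IsCoalgMap.toCoalgHom {R : H ⊗[k] U →ₗ[k] U ⊗[k] H} (hcm : IsCoalgMap R) :
    H ⊗[k] U →ₗc[k] U ⊗[k] H where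
  toLinearMap := R
  counit_comp := by rw [← counitTP_eq_counit, ← counitTP_eq_counit]; exact hcm.1
  map_comp_comul := hcm.2.symm

section Antipode

open HopfAlgebra

variable {R : H ⊗[k] U →ₗ[k] U ⊗[k] H}

theorem sum_twistedMul_R_tmul (hln : LeftNormal R) (hrm : RightMult R) {ι κ : Type*}
    (s : Finset ι) (t : Finset κ) (x y : ι → H) (a b : κ → U) {c : k}
    (hab : ∑ j ∈ t, a j * b j = c • 1) :
    ∑ i ∈ s, ∑ j ∈ t, twistedMul R (R (x i ⊗ₜ[k] a j) ⊗ₜ[k] (b j ⊗ₜ[k] y i)) =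
      c • ((1 : U) ⊗ₜ[k] ∑ i ∈ s, x i * y i) := by
  simp_rw [twistedMul_R_tmul hrm, ← map_sum, ← TensorProduct.tmul_sum, hab, tmul_smul,
    map_smul]
  simp only [hln _]
  simp [TensorProduct.tmul_sum, Finset.smul_sum]

theorem convWith_R_antipode_comm (hln : LeftNormal R) (hrm : RightMult R) :
    convWith (twistedMul R) R
        (TensorProduct.map (antipode k) (antipode k) ∘ₗ (TensorProduct.comm k H U).toLinearMap) =
      Coalgebra.counit.smulRight ((1 : U) ⊗ₜ[k] (1 : H)) := by
  refine TensorProduct.ext' fun h u => ?_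
  rw [convWith_tmul (Coalgebra.Repr.arbitrary k h) (Coalgebra.Repr.arbitrary k u)]
  simp only [LinearMap.coe_comp, Function.comp_apply, LinearEquiv.coe_coe,
    TensorProduct.comm_tmul, TensorProduct.map_tmul]
  rw [sum_twistedMul_R_tmul hln hrm _ _ _ _ _ _ (sum_mul_antipode_eq_smul _),
    sum_mul_antipode_eq_smul]
  simp [smul_smul]

theorem convWith_R_antipode_comm_id (hln : LeftNormal R) (hrm : RightMult R) :
    convWith (twistedMul R)
        (R ∘ₗ TensorProduct.map (antipode k) (antipode k) ∘ₗ
          (TensorProduct.comm k U H).toLinearMap)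
        LinearMap.id =
      Coalgebra.counit.smulRight ((1 : U) ⊗ₜ[k] (1 : H)) := by
  refine TensorProduct.ext' fun u h => ?_
  rw [convWith_tmul (Coalgebra.Repr.arbitrary k u) (Coalgebra.Repr.arbitrary k h)]
  simp only [LinearMap.coe_comp, Function.comp_apply, LinearEquiv.coe_coe,
    TensorProduct.comm_tmul, TensorProduct.map_tmul, LinearMap.id_apply]
  rw [Finset.sum_comm, sum_twistedMul_R_tmul hln hrm _ _ _ _ _ _ (sum_antipode_mul_eq_smul _),
    sum_antipode_mul_eq_smul]
  simp [smul_smul, mul_comm]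

end Antipode

/-- STATEMENT 18: for a normal, multiplicative coalgebra map `R : H ⊗ U → U ⊗ H`,
`S_U(u^R)^r ⊗ S_H(h^R)^r = S_U(u) ⊗ S_H(h)`, i.e.
`R ∘ (S_H ⊗ S_U) ∘ τ ∘ R = (S_U ⊗ S_H) ∘ τ` as linear maps `H ⊗ U → U ⊗ H`. -/
theorem antipode_R_identity (R : H ⊗[k] U →ₗ[k] U ⊗[k] H)
    (hln : LeftNormal R) (hrn : RightNormal R)
    (hlm : LeftMult R) (hrm : RightMult R) (hcm : IsCoalgMap R) :
    R ∘ₗ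
      TensorProduct.map (HopfAlgebra.antipode (R := k) (A := H))
        (HopfAlgebra.antipode (R := k) (A := U)) ∘ₗ
      (TensorProduct.comm k U H).toLinearMap ∘ₗ R =
    TensorProduct.map (HopfAlgebra.antipode (R := k) (A := U))
        (HopfAlgebra.antipode (R := k) (A := H)) ∘ₗ
      (TensorProduct.comm k H U).toLinearMap := by
  have hleft : convWith (twistedMul R)
      ((R ∘ₗ TensorProduct.map (HopfAlgebra.antipode k) (HopfAlgebra.antipode k) ∘ₗ
        (TensorProduct.comm k U H).toLinearMap) ∘ₗ hcm.toCoalgHom.toLinearMap)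
      (LinearMap.id ∘ₗ hcm.toCoalgHom.toLinearMap) =
      Coalgebra.counit.smulRight ((1 : U) ⊗ₜ[k] (1 : H)) := by
    rw [convWith_comp_coalgHom, convWith_R_antipode_comm_id hln hrm,
      counit_smulRight_comp_coalgHom]
  exact convWith_left_inv_eq_right_inv (twistedMul_assoc hlm hrm) (twistedMul_one_tmul hrn)
    (twistedMul_tmul_one hln) hleft (convWith_R_antipode_comm hln hrm)
end
end
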